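/- Let V be a 2-dimensional complex vector space with nonzero η ∈ Λ²V*, and let W ⊆ V^k be a k-dimensional subspace Lagrangian for η_k = Σᵢ prᵢ*η. Suppose the kernel of the projection π : W → V^{k-1} onto the last k−1 factors has dimension at most 1. Then there exists a linear form μ on V such that W_μ := W ∩ ker(pr₁*μ) has dimension k−1 and is mapped injectively by π onto a subspace of V^{k-1} that is Lagrangian for η_{k-1}. -/

import Mathlib

open Module

/-!
Splitting off the first factor gives `η_k(x, y) = η(x₀, y₀) + η_{k-1}(tail x, tail y)`.
A nonzero alternating form on a plane is nondegenerate, hence so is `η_{k-1}`, and its isotropic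
subspaces have dimension at most `k - 1`. So if every `w ∈ W` had `w₀ = 0`, the tail would embed
`W` isotropically in `V^{k-1}`, which is impossible: some `v ∈ W` has `v₀ ≠ 0`, and when
`W ∩ ker π` is a line we may take `v` spanning it. Any `μ` with `μ(v₀) ≠ 0` then works:
`W_μ` is a hyperplane of `W` meeting `W ∩ ker π` trivially, so `π` is injective on it, and on
`W_μ` the term `η(x₀, y₀)` vanishes because `x₀, y₀` lie on the line `ker μ`.
-/

namespace LinearMap

variable {K V : Type*} [Field K] [AddCommGroup V] [Module K V] {η : V →ₗ[K] V →ₗ[K] K}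

lemma IsAlt.eq_zero_and_eq_zero_of_apply_smul_add_smul (hη : η.IsAlt) {a b : V}
    (hab : η a b ≠ 0) {s t : K} (ha : η (s • a + t • b) a = 0) (hb : η (s • a + t • b) b = 0) :
    s = 0 ∧ t = 0 := by
  have hba : η b a = -η a b := (hη.neg a b).symm
  simp only [map_add, map_smul, add_apply, smul_apply, hη.self_eq_zero, hba, smul_eq_mul] at ha hb
  constructor
  · simpa [hab] using hb
  · simpa [hab] using ha

lemma IsAlt.separatingLeft_of_finrank_eq_two (hη : η.IsAlt) (hne : η ≠ 0)
    (hV : finrank K V = 2) : η.SeparatingLeft := by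
  obtain ⟨a, b, hab⟩ : ∃ a b, η a b ≠ 0 := by
    by_contra! h
    exact hne (ext₂ h)
  have hli : LinearIndependent K ![a, b] := LinearIndependent.pair_iff.mpr fun s t hst =>
    hη.eq_zero_and_eq_zero_of_apply_smul_add_smul hab (by simp [hst]) (by simp [hst])
  have hspan := hli.span_eq_top_of_card_eq_finrank (by simp [hV])
  intro x hx
  obtain ⟨c, rfl⟩ := (Submodule.mem_span_range_iff_exists_fun K).mp
    (hspan ▸ Submodule.mem_top : x ∈ _)
  rw [Fin.sum_univ_two] at hx ⊢
  obtain ⟨h0, h1⟩ := hη.eq_zero_and_eq_zero_of_apply_smul_add_smul hab (hx a) (hx b)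
  simp [h0, h1]

lemma IsAlt.apply_eq_zero_of_finrank_le_one [FiniteDimensional K V] (hη : η.IsAlt)
    {S : Submodule K V} (hS : finrank K S ≤ 1) {a b : V} (ha : a ∈ S) (hb : b ∈ S) :
    η a b = 0 := by
  obtain ⟨v, hv⟩ := finrank_le_one_iff.mp hS
  obtain ⟨c, hc⟩ := hv ⟨a, ha⟩
  obtain ⟨d, hd⟩ := hv ⟨b, hb⟩
  simp only [Subtype.ext_iff, Submodule.coe_smul] at hc hd
  rw [← hc, ← hd]
  simp [hη.self_eq_zero]

lemma BilinForm.two_mul_finrank_le_of_le_orthogonal {E : Type*} [AddCommGroup E] [Module K E]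
    [FiniteDimensional K E] {B : LinearMap.BilinForm K E} (hB : B.Nondegenerate)
    {U : Submodule K E} (hU : U ≤ B.orthogonal U) : 2 * finrank K U ≤ finrank K E := by
  have := Submodule.finrank_mono hU
  rw [LinearMap.BilinForm.finrank_orthogonal hB] at this
  have := Submodule.finrank_le U
  omega

variable (η) (ι : Type*) [Fintype ι]

def piForm : LinearMap.BilinForm K (ι → V) := ∑ i, η.compl₁₂ (proj i) (proj i)

variable {η ι}

@[simp]
lemma piForm_apply (x y : ι → V) : η.piForm ι x y = ∑ i, η (x i) (y i) := by
  simp [piForm, LinearMap.sum_apply]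

lemma piForm_fin_succ_apply {n : ℕ} (x y : Fin (n + 1) → V) :
    η.piForm (Fin (n + 1)) x y = η (x 0) (y 0) + η.piForm (Fin n) (Fin.tail x) (Fin.tail y) := by
  simp [Fin.sum_univ_succ, Fin.tail]

lemma IsAlt.piForm (hη : η.IsAlt) : (η.piForm ι).IsAlt := fun x => by
  simp [hη.self_eq_zero]

lemma SeparatingLeft.piForm (hη : η.SeparatingLeft) : (η.piForm ι).SeparatingLeft := by
  classical
  exact fun x hx => funext fun i =>
    hη _ fun v => by simpa [Pi.single_apply, apply_ite] using hx (Pi.single i v)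

lemma finrank_le_card_of_le_orthogonal_piForm (hη : η.IsAlt) (hne : η ≠ 0)
    (hV : finrank K V = 2) {U : Submodule K (ι → V)} (hU : U ≤ (η.piForm ι).orthogonal U) :
    finrank K U ≤ Fintype.card ι := by
  have : FiniteDimensional K V := .of_finrank_pos (by omega)
  have hnd : (η.piForm ι).Nondegenerate :=
    hη.piForm.isRefl.nondegenerate_iff_separatingLeft.mpr
      (hη.separatingLeft_of_finrank_eq_two hne hV).piForm
  have := BilinForm.two_mul_finrank_le_of_le_orthogonal hnd hU
  simp only [finrank_pi_fintype, hV, Finset.sum_const, Finset.card_univ, smul_eq_mul] at this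
  omega

end LinearMap

namespace Submodule

variable {K E : Type*} [Field K] [AddCommGroup E] [Module K E] {W : Submodule K E}
  {f : Module.Dual K E} {v : E}

lemma finrank_inf_ker_add_one [FiniteDimensional K E] (hv : v ∈ W) (hfv : f v ≠ 0) :
    finrank K ↥(W ⊓ LinearMap.ker f) + 1 = finrank K W := by
  have hf : f.domRestrict W ≠ 0 := fun h => hfv (LinearMap.congr_fun h ⟨v, hv⟩)
  rw [← Module.Dual.finrank_ker_add_one_of_ne_zero hf, LinearMap.ker_domRestrict,
    ← finrank_map_subtype_eq, map_comap_subtype, inf_comm]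

lemma disjoint_inf_ker_of_inf_ker_le_span {F : Type*} [AddCommGroup F] [Module K F]
    {g : E →ₗ[K] F} (hg : W ⊓ LinearMap.ker g ≤ K ∙ v) (hfv : f v ≠ 0) :
    Disjoint (W ⊓ LinearMap.ker f) (LinearMap.ker g) := by
  refine disjoint_def.mpr fun x hx hxg => ?_
  obtain ⟨c, rfl⟩ := mem_span_singleton.mp (hg ⟨hx.1, hxg⟩)
  have : c * f v = 0 := by simpa using hx.2
  simp [(mul_eq_zero.mp this).resolve_right hfv]

end Submodule

section HeadTail

open LinearMap

variable {K V : Type*} [Field K] [AddCommGroup V] [Module K V] {n : ℕ}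

lemma eq_zero_of_apply_zero_of_mem_ker_funLeft_succ {x : Fin (n + 1) → V} (h0 : x 0 = 0)
    (ht : x ∈ ker (funLeft K V Fin.succ)) : x = 0 :=
  funext <| Fin.cases h0 (congrFun ht)

variable {η : V →ₗ[K] V →ₗ[K] K} {W : Submodule K (Fin (n + 1) → V)}

lemma exists_mem_apply_zero_ne_zero (hη : η.IsAlt) (hne : η ≠ 0) (hV : finrank K V = 2)
    (hdim : finrank K W = n + 1) (hW : W ≤ (η.piForm (Fin (n + 1))).orthogonal W) :
    ∃ w ∈ W, w 0 ≠ 0 := by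
  by_contra! h0
  set g := (funLeft K V Fin.succ).domRestrict W
  have hg : Function.Injective g := injective_domRestrict_iff.mpr <| Submodule.disjoint_def.mpr
    fun x hx hxt => eq_zero_of_apply_zero_of_mem_ker_funLeft_succ (h0 x hx) hxt
  have hiso : range g ≤ (η.piForm (Fin n)).orthogonal (range g) := by
    rintro _ ⟨y, rfl⟩
    refine BilinForm.mem_orthogonal_iff.mpr ?_
    rintro _ ⟨x, rfl⟩
    have := BilinForm.mem_orthogonal_iff.mp (hW y.2) x x.2
    rwa [piForm_fin_succ_apply, h0 x x.2, map_zero, LinearMap.zero_apply, zero_add] at this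
  have := finrank_le_card_of_le_orthogonal_piForm hη hne hV hiso
  rw [finrank_range_of_inj hg, hdim, Fintype.card_fin] at this
  omega

lemma exists_mem_apply_zero_ne_zero_and_inf_ker_le_span [FiniteDimensional K V]
    (hη : η.IsAlt) (hne : η ≠ 0) (hV : finrank K V = 2)
    (hdim : finrank K W = n + 1) (hW : W ≤ (η.piForm (Fin (n + 1))).orthogonal W)
    (hker : finrank K ↥(W ⊓ ker (funLeft K V Fin.succ)) ≤ 1) :
    ∃ v ∈ W, v 0 ≠ 0 ∧ W ⊓ ker (funLeft K V Fin.succ) ≤ K ∙ v := by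
  rcases eq_or_ne (W ⊓ ker (funLeft K V Fin.succ)) ⊥ with hbot | hne_bot
  · obtain ⟨v, hvW, hv0⟩ := exists_mem_apply_zero_ne_zero hη hne hV hdim hW
    exact ⟨v, hvW, hv0, hbot.trans_le bot_le⟩
  · obtain ⟨z, hz, hz0⟩ := Submodule.exists_mem_ne_zero_of_ne_bot hne_bot
    refine ⟨z, hz.1, fun h => hz0 (eq_zero_of_apply_zero_of_mem_ker_funLeft_succ h hz.2), ?_⟩
    refine (Submodule.eq_of_le_of_finrank_le ?_ ?_).ge
    · exact (Submodule.span_singleton_le_iff_mem _ _).mpr hz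
    · rwa [finrank_span_singleton hz0]

end HeadTail

/-- Let `V` be a 2-dimensional complex vector space with nonzero `η ∈ Λ²V*`, and
`W ⊆ V^k` a `k`-dimensional subspace which is Lagrangian for `η_k = Σᵢ prᵢ*η`.
If the kernel of the projection `π : W → V^{k-1}` onto the last `k-1` factors has
dimension at most `1`, then there is a linear form `μ` on `V` such that
`W_μ := W ∩ ker (pr₁*μ)` has dimension `k-1`, is mapped injectively by `π`, and its
image is Lagrangian (isotropic of dimension `k-1`) for `η_{k-1}`. -/
theorem stmt1 {V : Type*} [AddCommGroup V] [Module ℂ V]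
    (hV : finrank ℂ V = 2)
    (η : V →ₗ[ℂ] V →ₗ[ℂ] ℂ) (hη_alt : ∀ v, η v v = 0) (hη_ne : η ≠ 0)
    (k : ℕ) (hk : 0 < k)
    (W : Submodule ℂ (Fin k → V)) (hdim : finrank ℂ W = k)
    (hLag : ∀ v ∈ W, ∀ w ∈ W, ∑ i, η (v i) (w i) = 0)
    (π : (Fin k → V) →ₗ[ℂ] (Fin (k - 1) → V))
    (hπ : π = LinearMap.funLeft ℂ V
      (fun i : Fin (k - 1) => (⟨i.1 + 1, by have := i.2; omega⟩ : Fin k)))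
    (hker : finrank ℂ ↥(W ⊓ LinearMap.ker π) ≤ 1) :
    ∃ μ : V →ₗ[ℂ] ℂ,
      finrank ℂ ↥(W ⊓ LinearMap.ker (μ ∘ₗ LinearMap.proj (⟨0, hk⟩ : Fin k))) = k - 1 ∧
      Set.InjOn π
        ((W ⊓ LinearMap.ker (μ ∘ₗ LinearMap.proj (⟨0, hk⟩ : Fin k)) : Submodule ℂ _) :
          Set (Fin k → V)) ∧
      ∀ x ∈ W ⊓ LinearMap.ker (μ ∘ₗ LinearMap.proj (⟨0, hk⟩ : Fin k)),
        ∀ y ∈ W ⊓ LinearMap.ker (μ ∘ₗ LinearMap.proj (⟨0, hk⟩ : Fin k)),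
          ∑ i : Fin (k - 1), η (π x i) (π y i) = 0 := by
  have : FiniteDimensional ℂ V := .of_finrank_pos (by omega)
  obtain ⟨n, rfl⟩ : ∃ n, k = n + 1 := ⟨k - 1, by omega⟩
  subst hπ
  rw [show (⟨0, hk⟩ : Fin (n + 1)) = 0 from rfl]
  have hη : η.IsAlt := hη_alt
  have hW : W ≤ (η.piForm (Fin (n + 1))).orthogonal W := fun y hy =>
    LinearMap.BilinForm.mem_orthogonal_iff.mpr fun x hx => by simpa using hLag x hx y hy
  obtain ⟨v, hvW, hv0, hker_le⟩ :=
    exists_mem_apply_zero_ne_zero_and_inf_ker_le_span hη hη_ne hV hdim hW hker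
  obtain ⟨μ, hμ⟩ := Module.Projective.exists_dual_ne_zero ℂ hv0
  have hμv : (μ ∘ₗ LinearMap.proj 0) v ≠ 0 := hμ
  refine ⟨μ, ?_, ?_, ?_⟩
  · have := Submodule.finrank_inf_ker_add_one hvW hμv
    omega
  · exact LinearMap.injOn_of_disjoint_ker le_rfl
      (Submodule.disjoint_inf_ker_of_inf_ker_le_span hker_le hμv)
  · intro x hx y hy
    have hkerμ : finrank ℂ (LinearMap.ker μ) ≤ 1 := by
      have := Module.Dual.finrank_ker_add_one_of_ne_zero (f := μ) (by rintro rfl; exact hμ rfl)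
      omega
    have h0 : η (x 0) (y 0) = 0 := hη.apply_eq_zero_of_finrank_le_one hkerμ hx.2 hy.2
    have := LinearMap.BilinForm.mem_orthogonal_iff.mp (hW hy.1) x hx.1
    rwa [LinearMap.piForm_fin_succ_apply, h0, zero_add, LinearMap.piForm_apply] at this
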